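/- Let R be a commutative ring with 1/2 ∈ R that is weakly 4-fold stable, and let r₁, …, r_N ∈ R^* (N ≥ 2) be units with r₁ + … + r_N = 0. Then in K^M_2(R[ε]) one has {1 + r₁·ε, r₁} + … + {1 + r_N·ε, r_N} = 0. -/

import Mathlib

open TrivSqZeroExt

/-- The relations defining the Milnor K-group of a commutative ring `S`:
multilinearity relations and Steinberg relations (a generator `r₁ ⊗ … ⊗ r_n` with some
pair of consecutive entries summing to `1`). -/
def milnorRelSet (S : Type*) [CommRing S] (n : ℕ) : Set (FreeAbelianGroup (Fin n → Sˣ)) :=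
  {x | ∃ (f : Fin n → Sˣ) (i : Fin n) (u v : Sˣ),
      x = FreeAbelianGroup.of (Function.update f i (u * v))
        - FreeAbelianGroup.of (Function.update f i u)
        - FreeAbelianGroup.of (Function.update f i v)} ∪
  {x | ∃ (f : Fin n → Sˣ) (i j : Fin n), (i : ℕ) + 1 = (j : ℕ) ∧
      ((f i : S) + (f j : S) = 1) ∧ x = FreeAbelianGroup.of f}

/-- The `n`-th Milnor K-group of a commutative ring `S`: the quotient of `(Sˣ)^{⊗ n}`
(presented as the free abelian group on `n`-tuples of units, modulo multilinearity)
by the Steinberg relations. -/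
def MilnorK (S : Type*) [CommRing S] (n : ℕ) : Type _ :=
  FreeAbelianGroup (Fin n → Sˣ) ⧸ AddSubgroup.closure (milnorRelSet S n)

instance (S : Type*) [CommRing S] (n : ℕ) : AddCommGroup (MilnorK S n) :=
  QuotientAddGroup.Quotient.addCommGroup _

/-- The Milnor symbol `{r₁, …, r_n}`. -/
def milnorSymbol {S : Type*} [CommRing S] {n : ℕ} (f : Fin n → Sˣ) : MilnorK S n :=
  QuotientAddGroup.mk (FreeAbelianGroup.of f)

/-- Functoriality of Milnor K-groups in ring homomorphisms. -/
def MilnorK.map {S T : Type*} [CommRing S] [CommRing T] (φ : S →+* T) (n : ℕ) :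
    MilnorK S n →+ MilnorK T n := by
  refine QuotientAddGroup.lift _
    ((QuotientAddGroup.mk' (AddSubgroup.closure (milnorRelSet T n))).comp
      (FreeAbelianGroup.map (fun f => (Units.map (φ : S →* T)) ∘ f))) ?_
  intro x hx
  revert x hx
  rw [← SetLike.le_def, AddSubgroup.closure_le]
  rintro x (⟨f, i, u, v, rfl⟩ | ⟨f, i, j, hij, hsum, rfl⟩) <;>
    simp only [SetLike.mem_coe, AddMonoidHom.mem_ker, map_sub]
  · show milnorSymbol (Units.map (φ : S →* T) ∘ Function.update f i (u * v))
      - milnorSymbol (Units.map (φ : S →* T) ∘ Function.update f i u)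
      - milnorSymbol (Units.map (φ : S →* T) ∘ Function.update f i v) = (0 : MilnorK T n)
    unfold milnorSymbol
    change (_ : FreeAbelianGroup (Fin n → Tˣ) ⧸ AddSubgroup.closure (milnorRelSet T n)) - _ - _ = 0
    rw [← QuotientAddGroup.mk_sub, ← QuotientAddGroup.mk_sub, QuotientAddGroup.eq_zero_iff]
    refine AddSubgroup.subset_closure (Or.inl ⟨Units.map (φ : S →* T) ∘ f, i,
      Units.map (φ : S →* T) u, Units.map (φ : S →* T) v, ?_⟩)
    simp [Function.comp_update]
  · show milnorSymbol (Units.map (φ : S →* T) ∘ f) = (0 : MilnorK T n)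
    unfold milnorSymbol
    change (_ : FreeAbelianGroup (Fin n → Tˣ) ⧸ AddSubgroup.closure (milnorRelSet T n)) = 0
    rw [QuotientAddGroup.eq_zero_iff]
    refine AddSubgroup.subset_closure (Or.inr ⟨Units.map (φ : S →* T) ∘ f, i, j, hij, ?_, rfl⟩)
    simp only [Function.comp_apply, Units.coe_map, MonoidHom.coe_coe]
    rw [← map_add, hsum, map_one]

/-- The unit `1 + r·ε` of the dual numbers, with inverse `1 - r·ε`. -/
def oneAddEps (R : Type*) [CommRing R] (r : R) : (DualNumber R)ˣ where
  val := 1 + inr r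
  inv := 1 - inr r
  val_inv := by
    have h : (inr r : DualNumber R) * inr r = 0 := inr_mul_inr R r r
    ring_nf
    simp [pow_two, h]
  inv_val := by
    have h : (inr r : DualNumber R) * inr r = 0 := inr_mul_inr R r r
    ring_nf
    simp [pow_two, h]

/-- The `R`-algebra endomorphism `σ_a` of the dual numbers sending `ε` to `a·ε`. -/
def epsScale (R : Type*) [CommRing R] (a : R) : DualNumber R →+* DualNumber R where
  toFun x := inl x.fst + inr (a * x.snd)
  map_one' := by simp
  map_mul' x y := by
    ext
    · simp
    · simp [snd_mul, smul_eq_mul, mul_comm, mul_add]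
      ring
  map_zero' := by simp
  map_add' x y := by ext <;> simp [mul_add]

/-- A commutative ring `R` is weakly `k`-fold stable if for any `k - 1` elements
there is a unit `r` such that adding `r` to each of them yields a unit. -/
def WeaklyStable (R : Type*) [CommRing R] (k : ℕ) : Prop :=
  ∀ r : Fin (k - 1) → R, ∃ u : Rˣ, ∀ i, IsUnit (r i + (u : R))

/-!
Assume `1/2 ∈ R`. The symbols `{1 + xε, 1 + yε}` form a biadditive pairing on `R`, alternating
because `-(1 + xε)` pairs trivially with its negative. Stability makes `{1 + xε, v}` and
`{v, 1 + xε}` cancel, and then the Steinberg relation for `y/z + x/z = 1`, twisted by `1 + xε`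
and `1 - yε`, reads `{1 + xε, 1 + yε} = D x + D y - D z` with `D v = {1 + vε, v}`, whenever
`x`, `y`, `z = x + y` are units. The right side is symmetric, so twice the pairing vanishes on
such pairs, hence everywhere because stability writes elements as sums of suitable units; halving
kills the pairing. So `D` is additive on units, and stability merges the terms of `∑ rᵢ = 0` two
at a time until two opposite units remain.
-/

section MilnorKTwo

variable {S : Type*} [CommRing S]

theorem milnorSymbol_update_mul {n : ℕ} (f : Fin n → Sˣ) (i : Fin n) (u v : Sˣ) :
    milnorSymbol (Function.update f i (u * v)) =
      milnorSymbol (Function.update f i u) + milnorSymbol (Function.update f i v) := by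
  rw [← sub_eq_zero, ← sub_sub]
  exact (QuotientAddGroup.eq_zero_iff _).2
    (AddSubgroup.subset_closure (Or.inl ⟨f, i, u, v, rfl⟩))

theorem milnorSymbol_eq_zero_of_add_eq_one (u v : Sˣ) (h : (u : S) + v = 1) :
    milnorSymbol ![u, v] = 0 :=
  (QuotientAddGroup.eq_zero_iff _).2
    (AddSubgroup.subset_closure (Or.inr ⟨![u, v], 0, 1, rfl, h, rfl⟩))

theorem milnorSymbol_mul_left (u v w : Sˣ) :
    milnorSymbol ![u * v, w] = milnorSymbol ![u, w] + milnorSymbol ![v, w] := by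
  convert milnorSymbol_update_mul ![1, w] 0 u v using 3 <;> funext i <;> fin_cases i <;> rfl

theorem milnorSymbol_mul_right (u v w : Sˣ) :
    milnorSymbol ![u, v * w] = milnorSymbol ![u, v] + milnorSymbol ![u, w] := by
  convert milnorSymbol_update_mul ![u, 1] 1 v w using 3 <;> funext i <;> fin_cases i <;> rfl

theorem milnorSymbol_one_left (w : Sˣ) : milnorSymbol ![(1 : Sˣ), w] = 0 := by
  simpa using milnorSymbol_mul_left (1 : Sˣ) 1 w

theorem milnorSymbol_one_right (u : Sˣ) : milnorSymbol ![u, (1 : Sˣ)] = 0 := by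
  simpa using milnorSymbol_mul_right u (1 : Sˣ) 1

theorem milnorSymbol_inv_left (u w : Sˣ) : milnorSymbol ![u⁻¹, w] = -milnorSymbol ![u, w] := by
  rw [eq_neg_iff_add_eq_zero, ← milnorSymbol_mul_left, inv_mul_cancel, milnorSymbol_one_left]

theorem milnorSymbol_inv_right (u w : Sˣ) : milnorSymbol ![u, w⁻¹] = -milnorSymbol ![u, w] := by
  rw [eq_neg_iff_add_eq_zero, ← milnorSymbol_mul_right, inv_mul_cancel, milnorSymbol_one_right]

/-- `-u = (1 - u) / (1 - u⁻¹)`, and both factors pair trivially with `u` by the Steinberg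
relation. -/
theorem milnorSymbol_neg_self (u : Sˣ) (h : IsUnit (1 - (u : S))) :
    milnorSymbol ![u, -u] = 0 := by
  obtain ⟨m, hm⟩ := h
  set m' : Sˣ := -m * u⁻¹
  have hm' : (m' : S) = 1 - (u⁻¹ : Sˣ) := by
    simp only [m', Units.val_mul, Units.val_neg, hm]
    linear_combination u.mul_inv
  have hneg : -u = m * m'⁻¹ := by
    rw [eq_mul_inv_iff_mul_eq]
    ext
    simp only [Units.val_mul, Units.val_neg, hm', hm]
    linear_combination u.mul_inv
  have h1 : milnorSymbol ![u, m] = 0 :=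
    milnorSymbol_eq_zero_of_add_eq_one u m (by rw [hm]; ring)
  have h2 : milnorSymbol ![u⁻¹, m'] = 0 :=
    milnorSymbol_eq_zero_of_add_eq_one u⁻¹ m' (by rw [hm']; ring)
  rw [milnorSymbol_inv_left, neg_eq_zero] at h2
  rw [hneg, milnorSymbol_mul_right, milnorSymbol_inv_right, h1, h2, neg_zero, add_zero]

theorem milnorSymbol_add_swap (u v : Sˣ) :
    milnorSymbol ![u, v] + milnorSymbol ![v, u] =
      milnorSymbol ![u * v, -(u * v)] - milnorSymbol ![u, -u] - milnorSymbol ![v, -v] := by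
  rw [milnorSymbol_mul_left, ← neg_mul, milnorSymbol_mul_right, neg_mul, ← mul_neg,
    milnorSymbol_mul_right]
  abel

end MilnorKTwo

section WeaklyStable

variable {R : Type*} [CommRing R]

theorem WeaklyStable.exists_unit (hst : WeaklyStable R 4) (a b c : R) :
    ∃ t : Rˣ, IsUnit (a + t) ∧ IsUnit (b + t) ∧ IsUnit (c + t) := by
  obtain ⟨t, ht⟩ := hst ![a, b, c]
  exact ⟨t, ht 0, ht 1, ht 2⟩

theorem WeaklyStable.addMonoidHom_eq_zero_of_units {G : Type*} [AddCommGroup G] (hst : WeaklyStable R 4)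
    (f : R →+ R →+ G) (hf : ∀ x y z : Rˣ, (x : R) + y = z → f x y = 0) : f = 0 := by
  have unit_left (x : Rˣ) (y : R) : f x y = 0 := by
    obtain ⟨t, hxt, hyt, hxyt⟩ := hst.exists_unit x (-y) (-(x + y))
    obtain ⟨s, hs⟩ := hyt.neg
    have split : y = t + s := by rw [hs]; ring
    rw [split, map_add, hf x t hxt.unit hxt.unit_spec.symm, hf x s hxyt.neg.unit (by
      rw [hs, IsUnit.unit_spec]; ring), add_zero]
  ext x y
  obtain ⟨t, hxt, -, -⟩ := hst.exists_unit (-x) 0 0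
  obtain ⟨s, hs⟩ := hxt.neg
  have split : x = t + s := by rw [hs]; ring
  rw [split, map_add, AddMonoidHom.add_apply, unit_left, unit_left, add_zero,
    AddMonoidHom.zero_apply, AddMonoidHom.zero_apply]

theorem WeaklyStable.map_neg_of_add {G : Type*} [AddCommGroup G] (hst : WeaklyStable R 4)
    {D : Rˣ → G} (hD : ∀ x y z : Rˣ, (x : R) + y = z → D x + D y = D z) (x : Rˣ) :
    D (-x) = -D x := by
  obtain ⟨t, hxt, -, -⟩ := hst.exists_unit x 0 0
  have h₁ := hD x t hxt.unit hxt.unit_spec.symm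
  have h₂ := hD (-x) hxt.unit t (by rw [IsUnit.unit_spec, Units.val_neg]; ring)
  rw [← h₁, ← add_assoc, add_eq_right] at h₂
  exact eq_neg_of_add_eq_zero_left h₂

/-- Given units `x, b, c` with `x + b + c + ⋯ = 0`, pick a unit `t` with `x + t`, `b - t` and
`b - t + c` units; then `(x + t) + (b - t + c) + ⋯` is a shorter such sum with the same `D`-sum. -/
theorem WeaklyStable.add_add_sum_eq_zero_of_add {G : Type*} [AddCommGroup G]
    (hst : WeaklyStable R 4) {D : Rˣ → G} (hD : ∀ x y z : Rˣ, (x : R) + y = z → D x + D y = D z)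
    {n : ℕ} (x b : Rˣ) (r : Fin n → Rˣ) (hr : (x : R) + b + ∑ i, (r i : R) = 0) :
    D x + D b + ∑ i, D (r i) = 0 := by
  induction n generalizing x b with
  | zero =>
    have hb : b = -x := Units.ext (by simpa [eq_neg_iff_add_eq_zero, add_comm] using hr)
    simp [hb, hst.map_neg_of_add hD]
  | succ n ih =>
    rw [Fin.sum_univ_succ] at hr ⊢
    obtain ⟨t, hxt, hbt, hbct⟩ := hst.exists_unit x (-b) (-(b + r 0))
    obtain ⟨s, hs⟩ := hbt.neg
    obtain ⟨c, hc⟩ := hbct.neg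
    have hs' : (s : R) = b - t := by rw [hs]; ring
    have hc' : (s : R) + r 0 = c := by rw [hc, hs']; ring
    have shorter := ih hxt.unit c (fun i => r i.succ) (by
      rw [IsUnit.unit_spec, ← hc', hs']; linear_combination hr)
    rw [← hD x t _ hxt.unit_spec.symm, ← hD s (r 0) c hc'] at shorter
    rw [← hD t s b (by rw [hs']; ring), ← shorter]
    abel

theorem WeaklyStable.sum_eq_zero_of_add {G : Type*} [AddCommGroup G] (hst : WeaklyStable R 4)
    {D : Rˣ → G} (hD : ∀ x y z : Rˣ, (x : R) + y = z → D x + D y = D z) {n : ℕ}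
    (r : Fin (n + 2) → Rˣ) (hr : ∑ i, (r i : R) = 0) : ∑ i, D (r i) = 0 := by
  rw [Fin.sum_univ_succ, Fin.sum_univ_succ, ← add_assoc] at hr ⊢
  exact hst.add_add_sum_eq_zero_of_add hD _ _ _ hr

end WeaklyStable

section DualNumber

variable {R : Type*} [CommRing R]

local notation "ι" => Units.map (RingHom.toMonoidHom (algebraMap R (DualNumber R)))

@[simp]
theorem fst_oneAddEps (x : R) : (oneAddEps R x : DualNumber R).fst = 1 := by
  simp [oneAddEps]

@[simp]
theorem fst_units_map_algebraMap (u : Rˣ) : (ι u : DualNumber R).fst = u := by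
  simp [algebraMap_eq_inl]

theorem oneAddEps_add (x y : R) : oneAddEps R (x + y) = oneAddEps R x * oneAddEps R y := by
  ext <;> simp [oneAddEps, mul_add]

theorem oneAddEps_zero : oneAddEps R 0 = 1 := by
  ext <;> simp [oneAddEps]

theorem oneAddEps_neg (x : R) : oneAddEps R (-x) = (oneAddEps R x)⁻¹ :=
  eq_inv_of_mul_eq_one_left (by rw [← oneAddEps_add, neg_add_cancel, oneAddEps_zero])

theorem oneAddEps_half_mul_self [Invertible (2 : R)] (x : R) :
    oneAddEps R (⅟2 * x) * oneAddEps R (⅟2 * x) = oneAddEps R x := by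
  rw [← oneAddEps_add, ← add_mul, invOf_two_add_invOf_two, one_mul]

theorem milnorSymbol_oneAddEps_neg_one [Invertible (2 : R)] (x : R) :
    milnorSymbol ![oneAddEps R x, -1] = 0 := by
  rw [← oneAddEps_half_mul_self, milnorSymbol_mul_left, ← milnorSymbol_mul_right, neg_mul_neg,
    mul_one, milnorSymbol_one_right]

theorem milnorSymbol_neg_one_oneAddEps [Invertible (2 : R)] (x : R) :
    milnorSymbol ![-1, oneAddEps R x] = 0 := by
  rw [← oneAddEps_half_mul_self, milnorSymbol_mul_right, ← milnorSymbol_mul_left, neg_mul_neg,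
    mul_one, milnorSymbol_one_left]

variable (R) in
def epsPairing : R →+ R →+ MilnorK (DualNumber R) 2 :=
  AddMonoidHom.mk'
    (fun x => AddMonoidHom.mk' (fun y => milnorSymbol ![oneAddEps R x, oneAddEps R y])
      fun y y' => by rw [oneAddEps_add, milnorSymbol_mul_right])
    fun x x' => AddMonoidHom.ext fun y => by
      simp only [AddMonoidHom.mk'_apply, AddMonoidHom.add_apply, oneAddEps_add,
        milnorSymbol_mul_left]

theorem epsPairing_apply (x y : R) :
    epsPairing R x y = milnorSymbol ![oneAddEps R x, oneAddEps R y] := rfl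

/-- `-(1 + xε)` pairs trivially with its negative because `1 + (1 + xε) = 2 + xε` is a unit. -/
theorem epsPairing_self [Invertible (2 : R)] (x : R) : epsPairing R x x = 0 := by
  have h := milnorSymbol_neg_self (-oneAddEps R x) (by
    rw [isUnit_iff_isUnit_fst]
    simpa [one_add_one_eq_two] using isUnit_of_invertible (2 : R))
  rwa [neg_neg, ← neg_one_mul, milnorSymbol_mul_left, milnorSymbol_neg_one_oneAddEps,
    zero_add] at h

theorem epsPairing_add_swap [Invertible (2 : R)] (x y : R) :
    epsPairing R x y + epsPairing R y x = 0 := by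
  have h := epsPairing_self (R := R) (x + y)
  simp only [map_add, AddMonoidHom.add_apply, epsPairing_self, zero_add, add_zero] at h
  rwa [add_comm] at h

theorem milnorSymbol_oneAddEps_add_swap_of_isUnit [Invertible (2 : R)] (x : R) {v : Rˣ}
    (hv : IsUnit (1 - (v : R))) :
    milnorSymbol ![oneAddEps R x, ι v] + milnorSymbol ![ι v, oneAddEps R x] = 0 := by
  rw [milnorSymbol_add_swap, milnorSymbol_neg_self (ι v) (by simpa [isUnit_iff_isUnit_fst]),
    milnorSymbol_neg_self (oneAddEps R x * ι v) (by simpa [isUnit_iff_isUnit_fst]),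
    ← neg_one_mul (oneAddEps R x), milnorSymbol_mul_right, milnorSymbol_oneAddEps_neg_one,
    ← epsPairing_apply, epsPairing_self]
  simp

theorem milnorSymbol_oneAddEps_add_swap [Invertible (2 : R)] (hst : WeaklyStable R 4) (x : R)
    (v : Rˣ) : milnorSymbol ![oneAddEps R x, ι v] + milnorSymbol ![ι v, oneAddEps R x] = 0 := by
  obtain ⟨t, ht, hvt, -⟩ := hst.exists_unit (-1) (-v) 0
  have h₁ := milnorSymbol_oneAddEps_add_swap_of_isUnit x (v := t) (by
    convert ht.neg using 1; ring)
  have h₂ := milnorSymbol_oneAddEps_add_swap_of_isUnit x (v := t⁻¹ * v) (by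
    convert (t⁻¹).isUnit.mul hvt using 1
    push_cast
    linear_combination -t.inv_mul)
  rw [← mul_inv_cancel_left t v, map_mul, milnorSymbol_mul_right, milnorSymbol_mul_left,
    add_add_add_comm, h₁, h₂, add_zero]

theorem milnorSymbol_steinberg_oneAddEps {u w : Rˣ} (huw : (u : R) + w = 1) {a b : R}
    (hab : (u : R) * a + w * b = 0) :
    milnorSymbol ![ι u, oneAddEps R b] + milnorSymbol ![oneAddEps R a, ι w] + epsPairing R a b
      = 0 := by
  have h := milnorSymbol_eq_zero_of_add_eq_one (ι u * oneAddEps R a) (ι w * oneAddEps R b) (by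
    ext <;> simp [oneAddEps, algebraMap_eq_inl, huw, hab])
  rw [milnorSymbol_mul_left, milnorSymbol_mul_right, milnorSymbol_mul_right,
    milnorSymbol_eq_zero_of_add_eq_one (ι u) (ι w) (by simp [algebraMap_eq_inl, ← inl_add, huw])]
    at h
  rw [← h, epsPairing_apply]
  abel

variable (R) in
def diffSymbol (v : Rˣ) : MilnorK (DualNumber R) 2 :=
  milnorSymbol ![oneAddEps R v, ι v]

/-- The Steinberg relation for `y/z + x/z = 1`, twisted by `1 + xε` and `1 - yε`. -/
theorem epsPairing_units [Invertible (2 : R)] (hst : WeaklyStable R 4) {x y z : Rˣ}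
    (h : (x : R) + y = z) :
    epsPairing R x y = diffSymbol R x + diffSymbol R y - diffSymbol R z := by
  have hz := z.mul_inv
  have key := milnorSymbol_steinberg_oneAddEps (u := y * z⁻¹) (w := x * z⁻¹) (a := x) (b := -y)
    (by push_cast; linear_combination (↑z⁻¹ : R) * h + hz) (by push_cast; ring)
  have hswap := milnorSymbol_oneAddEps_add_swap hst y (y * z⁻¹)
  have hz_split : milnorSymbol ![oneAddEps R x, ι z] + milnorSymbol ![oneAddEps R y, ι z]
      = diffSymbol R z := by
    rw [← milnorSymbol_mul_left, ← oneAddEps_add, h]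
    rfl
  rw [oneAddEps_neg, milnorSymbol_inv_right, map_neg, eq_neg_of_add_eq_zero_right hswap] at key
  simp only [map_mul, map_inv, milnorSymbol_mul_right, milnorSymbol_inv_right] at key
  rw [← hz_split, diffSymbol, diffSymbol]
  linear_combination (norm := abel) -key

theorem epsPairing_eq_zero [Invertible (2 : R)] (hst : WeaklyStable R 4) : epsPairing R = 0 := by
  have hdouble : epsPairing R + epsPairing R = 0 :=
    hst.addMonoidHom_eq_zero_of_units _ fun x y z h => by
      have hsymm : epsPairing R x y = epsPairing R y x := by
        rw [epsPairing_units hst h, epsPairing_units hst (x := y) (y := x) (by rw [add_comm, h])]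
        abel
      rw [AddMonoidHom.add_apply, AddMonoidHom.add_apply]
      nth_rewrite 2 [hsymm]
      exact epsPairing_add_swap _ _
  ext x y
  have hx : x = ⅟2 * x + ⅟2 * x := by rw [← add_mul, invOf_two_add_invOf_two, one_mul]
  rw [AddMonoidHom.zero_apply, AddMonoidHom.zero_apply, hx, map_add, ← AddMonoidHom.add_apply,
    hdouble, AddMonoidHom.zero_apply, AddMonoidHom.zero_apply]

theorem diffSymbol_add [Invertible (2 : R)] (hst : WeaklyStable R 4) {x y z : Rˣ}
    (h : (x : R) + y = z) : diffSymbol R x + diffSymbol R y = diffSymbol R z := by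
  have hpair := epsPairing_units hst h
  rw [epsPairing_eq_zero hst, AddMonoidHom.zero_apply, AddMonoidHom.zero_apply] at hpair
  exact sub_eq_zero.mp hpair.symm

end DualNumber

/-- if `1/2 ∈ R`, `R` is weakly 4-fold stable and `r₁, …, r_N` (`N ≥ 2`) are
units with `r₁ + … + r_N = 0`, then `{1 + r₁ε, r₁} + … + {1 + r_Nε, r_N} = 0` in
`K^M_2(R[ε])`. -/
theorem stmt_14 (R : Type*) [CommRing R] [Invertible (2 : R)]
    (hst : WeaklyStable R 4) (N : ℕ) (hN : 2 ≤ N) (r : Fin N → Rˣ)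
    (hsum : ∑ i, (r i : R) = 0) :
    ∑ i, milnorSymbol ![oneAddEps R (r i : R),
        Units.map (algebraMap R (DualNumber R)).toMonoidHom (r i)]
      = (0 : MilnorK (DualNumber R) 2) := by
  obtain ⟨n, rfl⟩ : ∃ n, N = n + 2 := ⟨N - 2, by omega⟩
  exact hst.sum_eq_zero_of_add (fun x y z h => diffSymbol_add hst h) r hsum
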